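/- Let s ≥ 8 be an even integer and n ≥ 1 an integer, and define Ŕ_n(t) = n!^{s−6}·2^{12n}·∏_{j=1}^{3n}(t−n−1/2+j)^2 / ∏_{j=0}^{n}(t+j)^s. Then the series ∑_{ν=1}^∞ Ŕ_n(ν−1/2) converges absolutely and there exist rational numbers q_1, …, q_{s/2} such that ∑_{ν=1}^∞ Ŕ_n(ν−1/2) = ∑_{j=1}^{s/2} q_j·ζ(2j); that is, the sum is a rational linear combination of ζ(2), ζ(4), …, ζ(s), with no constant term. -/

import Mathlib

/-- The rational function
`R̂_n(t) = n!^{s−6} 2^{12n} ∏_{j=1}^{3n} (t−n−1/2+j)^2 / ∏_{j=0}^{n} (t+j)^s`. -/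
noncomputable def RzetaHat (s n : ℕ) (t : ℝ) : ℝ :=
  ((Nat.factorial n : ℝ) ^ (s - 6) * 2 ^ (12 * n) *
      ∏ j ∈ Finset.Icc 1 (3 * n), (t - (n : ℝ) - 1 / 2 + (j : ℝ)) ^ 2) /
    ∏ j ∈ Finset.range (n + 1), (t + (j : ℝ)) ^ s

/-- The value of the Riemann zeta function at a natural number `i ≥ 2`,
expressed as the real series `∑_{ℓ=1}^∞ 1/ℓ^i`. -/
noncomputable def zetaVal (i : ℕ) : ℝ := ∑' ℓ : ℕ, 1 / ((ℓ : ℝ) + 1) ^ i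

/-!
Partial fractions write `R̂_n(t) = ∑_{k ≤ n} ∑_{1 ≤ i ≤ s} c_{k,i} (t + k)^{-i}` with rational
`c_{k,i}` and no polynomial part, the numerator having degree `6n < (n + 1)s`. Summed over all
half-integers, each `(t + k)^{-i}` contributes
`∑_{m ∈ ℤ} (m + 1/2)^{-i} = (1 + (-1)^i)(2^i - 1)ζ(i)`, which vanishes for odd `i`; for `i = 1`
the series converges only with the terms at `m` and `-m - 1` paired, and then telescopes to `0`.
Because `s` is even, `R̂_n(-n - t) = R̂_n(t)`, and `R̂_n` vanishes at `-1/2, …, 1/2 - n`, so the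
negative half-integers contribute the same sum as the positive ones. Both halves are nonnegative,
which also gives the convergence.
-/

open Finset Filter Topology Polynomial

theorem intCast_add_half_ne_zero (m : ℤ) : (m : ℝ) + 1 / 2 ≠ 0 := by
  intro h
  have : ((2 * m + 1 : ℤ) : ℝ) = 0 := by push_cast; linarith
  have : 2 * m + 1 = 0 := by exact_mod_cast this
  omega

theorem hasSum_sub_nat_add {G : Type*} [AddCommGroup G] [TopologicalSpace G]
    [IsTopologicalAddGroup G] [T2Space G]
    {f : ℕ → G} (hf : Tendsto f atTop (𝓝 0)) (m : ℕ)
    (hs : Summable fun ν => f ν - f (ν + m)) :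
    HasSum (fun ν => f ν - f (ν + m)) (∑ j ∈ range m, f j) := by
  rw [hs.hasSum_iff_tendsto_nat]
  have hpartial : ∀ N, ∑ ν ∈ range N, (f ν - f (ν + m)) =
      ∑ j ∈ range m, f j - ∑ j ∈ range m, f (N + j) := by
    intro N
    rw [sum_sub_distrib, sub_eq_sub_iff_add_eq_add, ← sum_range_add, add_comm N m, sum_range_add]
    simp only [add_comm m]
  simp only [hpartial]
  have htail : Tendsto (fun N => ∑ j ∈ range m, f (N + j)) atTop (𝓝 0) := by
    simpa using tendsto_finsetSum (range m) fun j _ => hf.comp (tendsto_add_atTop_nat j)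
  simpa using tendsto_const_nhds.sub htail

theorem abs_inv_add_inv_le {K : Type*} [Field K] [LinearOrder K] [IsStrictOrderedRing K]
    {u v : K} (hu : u ≠ 0) (hv : v ≠ 0) :
    |u⁻¹ + v⁻¹| ≤ |u + v| / 2 * ((u ^ 2)⁻¹ + (v ^ 2)⁻¹) := by
  have hamgm : |u⁻¹ * v⁻¹| ≤ ((u ^ 2)⁻¹ + (v ^ 2)⁻¹) / 2 := by
    rw [abs_mul, ← inv_pow, ← inv_pow, ← sq_abs u⁻¹, ← sq_abs v⁻¹]
    nlinarith [sq_nonneg (|u⁻¹| - |v⁻¹|)]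
  calc |u⁻¹ + v⁻¹| = |u + v| * |u⁻¹ * v⁻¹| := by
        rw [← abs_mul]; congr 1; field_simp; ring
    _ ≤ |u + v| * (((u ^ 2)⁻¹ + (v ^ 2)⁻¹) / 2) := by gcongr
    _ = _ := by ring

/-- `∑_{m ∈ ℤ} (m + 1/2)^{-i}` for `i ≥ 2`: the terms with `m ≥ 0` give `(2^i - 1)ζ(i)`, those with
`m < 0` give `(-1)^i` times that. For `i = 1` it is `0`, the value of the series with the terms at
`m` and `-m - 1` paired. -/
noncomputable def halfIntZeta (i : ℕ) : ℝ := (1 + (-1) ^ i) * ((2 ^ i - 1) * zetaVal i)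

theorem summable_int_inv_add_half_pow {i : ℕ} (hi : 2 ≤ i) :
    Summable fun m : ℤ => (((m : ℝ) + 1 / 2) ^ i)⁻¹ := by
  refine Summable.of_norm ?_
  have hi' : (1 : ℝ) < i := by exact_mod_cast hi
  refine ((Real.summable_one_div_int_add_rpow (1 / 2) i).mpr hi').congr fun m => ?_
  rw [Real.rpow_natCast, norm_inv, norm_pow, Real.norm_eq_abs, one_div]

theorem hasSum_inv_nat_add_half_pow {i : ℕ} (hi : 2 ≤ i) :
    HasSum (fun ν : ℕ => (((ν : ℝ) + 1 / 2) ^ i)⁻¹) ((2 ^ i - 1) * zetaVal i) := by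
  set f : ℕ → ℝ := fun ℓ => 1 / ((ℓ : ℝ) + 1) ^ i
  have hB : Summable fun ν : ℕ => (((ν : ℝ) + 1 / 2) ^ i)⁻¹ := by
    refine ((summable_int_inv_add_half_pow hi).comp_injective Nat.cast_injective).congr fun ν => ?_
    simp
  set B := ∑' ν : ℕ, (((ν : ℝ) + 1 / 2) ^ i)⁻¹
  have hζ : HasSum f (zetaVal i) := by
    refine Summable.hasSum ?_
    simpa [f] using (summable_nat_add_iff 1).mpr (Real.summable_one_div_nat_pow.mpr hi)
  have heven : HasSum (fun ν => f (2 * ν)) ((2 ^ i)⁻¹ * B) := by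
    refine (hB.hasSum.mul_left _).congr_fun fun ν => ?_
    simp only [f, one_div, ← mul_inv, ← mul_pow]
    push_cast; ring_nf
  have hodd : HasSum (fun ν => f (2 * ν + 1)) ((2 ^ i)⁻¹ * zetaVal i) := by
    refine (hζ.mul_left _).congr_fun fun ν => ?_
    simp only [f, one_div, ← mul_inv, ← mul_pow]
    push_cast; ring_nf
  have hsplit := hζ.unique (heven.even_add_odd hodd)
  suffices B = (2 ^ i - 1) * zetaVal i from this ▸ hB.hasSum
  field_simp at hsplit
  linarith

theorem hasSum_int_inv_add_half_pow {i : ℕ} (hi : 2 ≤ i) :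
    HasSum (fun m : ℤ => (((m : ℝ) + 1 / 2) ^ i)⁻¹) (halfIntZeta i) := by
  have h := hasSum_inv_nat_add_half_pow hi
  rw [halfIntZeta, add_mul, one_mul]
  refine HasSum.of_nat_of_neg_add_one (by simpa using h) ((h.mul_left ((-1) ^ i)).congr_fun
    fun ν => ?_)
  push_cast
  rw [show -((ν : ℝ) + 1) + 1 / 2 = -1 * ((ν : ℝ) + 1 / 2) by ring, mul_pow, mul_inv, ← inv_pow,
    inv_neg, inv_one]

theorem hasSum_halfInt_pair_inv_pow_of_two_le {i : ℕ} (hi : 2 ≤ i) (k : ℕ) :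
    HasSum (fun ν : ℕ => (((ν : ℝ) + 1 / 2 + k) ^ i)⁻¹ + ((-((ν : ℝ) + 1 / 2) + k) ^ i)⁻¹)
      (halfIntZeta i) := by
  -- `m ↦ m + k` permutes `ℤ`, and the pairs `ν, -(ν + 1)` with `ν : ℕ` exhaust `ℤ`.
  have h := ((Equiv.addRight (k : ℤ)).hasSum_iff.mpr
    (hasSum_int_inv_add_half_pow hi)).nat_add_neg_add_one
  refine h.congr_fun fun ν => ?_
  simp only [Function.comp_apply, Equiv.coe_addRight]
  push_cast
  ring_nf

theorem sum_range_inv_add_half_sub_eq_zero (k : ℕ) :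
    ∑ j ∈ range (2 * k), ((j : ℝ) + 1 / 2 - k)⁻¹ = 0 := by
  have hreflect := sum_range_reflect (fun j : ℕ => ((j : ℝ) + 1 / 2 - k)⁻¹) (2 * k)
  have hanti : ∑ j ∈ range (2 * k), (((2 * k - 1 - j : ℕ) : ℝ) + 1 / 2 - k)⁻¹ =
      -∑ j ∈ range (2 * k), ((j : ℝ) + 1 / 2 - k)⁻¹ := by
    rw [← sum_neg_distrib]
    refine sum_congr rfl fun j hj => ?_
    rw [mem_range] at hj
    rw [Nat.cast_sub (by omega), Nat.cast_sub (by omega), ← inv_neg]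
    push_cast
    ring_nf
  linarith

theorem hasSum_halfInt_pair_inv (k : ℕ) :
    HasSum (fun ν : ℕ => ((ν : ℝ) + 1 / 2 + k)⁻¹ + (-((ν : ℝ) + 1 / 2) + k)⁻¹) 0 := by
  set f : ℕ → ℝ := fun ν => ((ν : ℝ) + 1 / 2 - k)⁻¹
  have hterm : ∀ ν : ℕ, ((ν : ℝ) + 1 / 2 + k)⁻¹ + (-((ν : ℝ) + 1 / 2) + k)⁻¹ =
      -(f ν - f (ν + 2 * k)) := by
    intro ν
    simp only [f]
    rw [show -((ν : ℝ) + 1 / 2) + k = -((ν : ℝ) + 1 / 2 - k) by ring, inv_neg]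
    push_cast
    ring_nf
  -- `u⁻¹ + v⁻¹` with `u + v = 2k` is dominated by `k (u⁻² + v⁻²)`, a pair with `i = 2`.
  have hsum : Summable fun ν : ℕ => ((ν : ℝ) + 1 / 2 + k)⁻¹ + (-((ν : ℝ) + 1 / 2) + k)⁻¹ := by
    refine Summable.of_norm_bounded
      ((hasSum_halfInt_pair_inv_pow_of_two_le le_rfl k).summable.mul_left (k : ℝ)) fun ν => ?_
    have hu : (ν : ℝ) + 1 / 2 + k ≠ 0 := by
      convert intCast_add_half_ne_zero (ν + k) using 1; push_cast; ring
    have hv : -((ν : ℝ) + 1 / 2) + k ≠ 0 := by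
      convert intCast_add_half_ne_zero (k - ν - 1) using 1; push_cast; ring
    rw [Real.norm_eq_abs]
    refine (abs_inv_add_inv_le hu hv).trans_eq ?_
    rw [show (ν : ℝ) + 1 / 2 + k + (-((ν : ℝ) + 1 / 2) + k) = 2 * k by ring,
      abs_of_nonneg (by positivity)]
    ring
  have hf : Tendsto f atTop (𝓝 0) :=
    tendsto_inv_atTop_zero.comp <| (tendsto_atTop_add_const_right atTop (1 / 2 - k : ℝ)
      tendsto_natCast_atTop_atTop).congr fun ν => by ring
  have htele := hasSum_sub_nat_add hf (2 * k) (hsum.neg.congr fun ν => by rw [hterm, neg_neg])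
  rw [sum_range_inv_add_half_sub_eq_zero] at htele
  rw [← neg_zero]
  exact htele.neg.congr_fun hterm

theorem hasSum_halfInt_pair_inv_pow {i : ℕ} (hi : 1 ≤ i) (k : ℕ) :
    HasSum (fun ν : ℕ => (((ν : ℝ) + 1 / 2 + k) ^ i)⁻¹ + ((-((ν : ℝ) + 1 / 2) + k) ^ i)⁻¹)
      (halfIntZeta i) := by
  rcases hi.eq_or_lt with rfl | hi
  · simpa [halfIntZeta] using hasSum_halfInt_pair_inv k
  · exact hasSum_halfInt_pair_inv_pow_of_two_le hi k

theorem sum_Icc_eq_sum_Icc_div_two_of_odd_eq_zero {M : Type*} [AddCommMonoid M] {w : ℕ → M}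
    (hw : ∀ i, Odd i → w i = 0) (s : ℕ) :
    ∑ i ∈ Icc 1 s, w i = ∑ j ∈ Icc 1 (s / 2), w (2 * j) := by
  rw [← sum_image (g := (2 * ·)) fun a _ b _ h => by simpa using h]
  refine (sum_subset (fun i hi => ?_) fun i hi hni => hw i ?_).symm
  · obtain ⟨j, hj, rfl⟩ := mem_image.mp hi
    simp only [mem_Icc] at hj ⊢
    omega
  · rw [Nat.odd_iff]
    by_contra h
    exact hni (mem_image.mpr ⟨i / 2, by simp only [mem_Icc] at hi ⊢; omega, by omega⟩)

theorem halfIntZeta_of_odd {i : ℕ} (hi : Odd i) : halfIntZeta i = 0 := by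
  simp [halfIntZeta, hi.neg_one_pow]

theorem halfIntZeta_two_mul (j : ℕ) :
    halfIntZeta (2 * j) = 2 * ((2 ^ (2 * j) - 1) * zetaVal (2 * j)) := by
  rw [halfIntZeta, (even_two_mul j).neg_one_pow]
  ring

theorem sum_sum_mul_halfIntZeta_eq {κ : Type*} (T : Finset κ) (c : κ → ℕ → ℚ) (s : ℕ) :
    ∑ k ∈ T, ∑ i ∈ Icc 1 s, (c k i : ℝ) * halfIntZeta i =
      2 * ∑ j ∈ Icc 1 (s / 2),
        (((2 ^ (2 * j) - 1) * ∑ k ∈ T, c k (2 * j) : ℚ) : ℝ) * zetaVal (2 * j) := by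
  rw [sum_comm, sum_Icc_eq_sum_Icc_div_two_of_odd_eq_zero
    (fun i hi => by simp [halfIntZeta_of_odd hi]), mul_sum]
  refine sum_congr rfl fun j _ => ?_
  rw [← sum_mul, halfIntZeta_two_mul]
  push_cast
  ring

section PartialFractions

variable {K : Type*} [Field K] {ι : Type*} [DecidableEq ι]

theorem degree_C_mul_X_sub_C_pow_mul_prod_erase_lt {S : Finset ι} {a : ι → K} {k : ι} (hk : k ∈ S)
    {j e : ℕ} (hj : j < e) (c : K) :
    (C c * (X - C (a k)) ^ j * ∏ m ∈ S.erase k, (X - C (a m)) ^ e).degree <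
      (∏ m ∈ S, (X - C (a m)) ^ e).degree := by
  have hE : (∏ m ∈ S.erase k, (X - C (a m)) ^ e).Monic :=
    monic_prod_of_monic _ _ fun m _ => (monic_X_sub_C _).pow e
  rw [mul_assoc, ← mul_prod_erase S _ hk]
  refine degree_lt_degree ((natDegree_C_mul_le _ _).trans_lt ?_)
  rw [((monic_X_sub_C _).pow _).natDegree_mul hE, ((monic_X_sub_C _).pow _).natDegree_mul hE]
  simpa using hj

theorem exists_eq_sum_C_mul_X_sub_C_pow_mul_prod {S : Finset ι} {a : ι → K} (ha : Set.InjOn a S)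
    {e : ℕ} {p : K[X]} (hp : p.degree < (#S * e : ℕ)) :
    ∃ c : ι → Fin e → K, p = ∑ k ∈ S, ∑ j : Fin e,
      C (c k j) * (X - C (a k)) ^ (j : ℕ) * ∏ m ∈ S.erase k, (X - C (a m)) ^ e := by
  have hcop : Set.Pairwise S fun k m => IsCoprime (X - C (a k)) (X - C (a m)) :=
    fun k hk m hm hkm =>
      isCoprime_X_sub_C_of_isUnit_sub (sub_ne_zero.mpr (ha.ne hk hm hkm)).isUnit
  obtain ⟨q, r, hr, hpqr⟩ := eq_quo_mul_prod_pow_add_sum_rem_mul_prod_pow p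
    (fun k _ => monic_X_sub_C (a k)) hcop (fun _ => e)
  have hconst : ∀ k ∈ S, ∀ j, r k j = C ((r k j).coeff 0) := fun k hk j =>
    eq_C_of_degree_le_zero (Nat.WithBot.lt_one_iff_le_zero.mp (degree_X_sub_C (a k) ▸ hr k hk j))
  set D := ∏ k ∈ S, (X - C (a k)) ^ e
  have hD : D.Monic := monic_prod_of_monic _ _ fun k _ => (monic_X_sub_C _).pow e
  have hDdeg : D.degree = (#S * e : ℕ) := by
    rw [degree_eq_natDegree hD.ne_zero, natDegree_prod_of_monic _ _ fun k _ =>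
      (monic_X_sub_C _).pow e]
    simp
  set R := ∑ k ∈ S, ∑ j : Fin e,
    C ((r k j).coeff 0) * (X - C (a k)) ^ (j : ℕ) * ∏ m ∈ S.erase k, (X - C (a m)) ^ e
  have hpR : p = q * D + R := by
    rw [hpqr]
    refine congrArg (q * D + ·) (sum_congr rfl fun k hk => sum_congr rfl fun j _ => ?_)
    rw [← hconst k hk j]
  have hRdeg : R.degree < D.degree := by
    have hbot : ⊥ < D.degree := by rw [hDdeg]; exact WithBot.bot_lt_coe _
    refine (degree_sum_le _ _).trans_lt ((Finset.sup_lt_iff hbot).mpr fun k hk => ?_)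
    exact (degree_sum_le _ _).trans_lt ((Finset.sup_lt_iff hbot).mpr fun j _ =>
      degree_C_mul_X_sub_C_pow_mul_prod_erase_lt hk j.2 _)
  have hq : q = 0 := by
    rw [← (div_modByMonic_unique (f := p) q R hD ⟨by rw [hpR]; ring, hRdeg⟩).1,
      divByMonic_eq_zero_iff hD, hDdeg]
    exact hp
  exact ⟨fun k j => (r k j).coeff 0, by rw [hpR, hq, zero_mul, zero_add]⟩

theorem exists_aeval_div_prod_eq_sum_inv_pow {L : Type*} [Field L] [Algebra K L] {S : Finset ι}
    {a : ι → K} (ha : Set.InjOn a S) {e : ℕ} {p : K[X]} (hp : p.degree < (#S * e : ℕ)) :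
    ∃ c : ι → ℕ → K, ∀ t : L, (∀ k ∈ S, t - algebraMap K L (a k) ≠ 0) →
      aeval t p / ∏ k ∈ S, (t - algebraMap K L (a k)) ^ e =
        ∑ k ∈ S, ∑ i ∈ Icc 1 e, algebraMap K L (c k i) * ((t - algebraMap K L (a k)) ^ i)⁻¹ := by
  obtain ⟨c, hc⟩ := exists_eq_sum_C_mul_X_sub_C_pow_mul_prod ha hp
  set c' : ι → ℕ → K := fun k i => if h : e - i < e then c k ⟨e - i, h⟩ else 0
  have hdiv : ∀ x : ι → L, (∀ k ∈ S, x k ≠ 0) →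
      (∑ k ∈ S, ∑ j : Fin e, algebraMap K L (c k j) * x k ^ (j : ℕ) *
        ∏ m ∈ S.erase k, x m ^ e) / ∏ k ∈ S, x k ^ e =
      ∑ k ∈ S, ∑ i ∈ Icc 1 e, algebraMap K L (c' k i) * (x k ^ i)⁻¹ := by
    intro x hx
    rw [sum_div]
    refine sum_congr rfl fun k hk => ?_
    have hE : ∏ m ∈ S.erase k, x m ^ e ≠ 0 :=
      prod_ne_zero_iff.mpr fun m hm => pow_ne_zero _ (hx m (mem_of_mem_erase hm))
    have hterm : ∀ j : Fin e, algebraMap K L (c k j) * x k ^ (j : ℕ) *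
        (∏ m ∈ S.erase k, x m ^ e) / ∏ m ∈ S, x m ^ e =
        algebraMap K L (c k j) * (x k ^ (e - j))⁻¹ := by
      intro j
      rw [← mul_prod_erase S _ hk, mul_div_mul_right _ _ hE, pow_sub₀ _ (hx k hk) j.2.le,
        mul_inv, inv_inv]
      ring
    rw [sum_div, Fintype.sum_congr _ _ hterm]
    refine sum_bij' (fun j _ => e - j) (fun i hi => ⟨e - i, by simp at hi; omega⟩)
      (fun j _ => by simp; omega) (fun i _ => by simp) (fun j _ => by ext; simp; omega)
      (fun i hi => by simp at hi ⊢; omega) fun j _ => ?_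
    simp only [c', dif_pos (show e - (e - j) < e by omega)]
    congr 4
    ext; simp; omega
  refine ⟨c', fun t ht => ?_⟩
  rw [← hdiv _ ht, hc]
  simp only [map_sum, map_mul, map_pow, map_prod, aeval_C, aeval_X, map_sub]

end PartialFractions

section RzetaHat

variable {s n : ℕ}

theorem RzetaHat_eq_sum_inv_pow (hs : 6 ≤ s) :
    ∃ c : ℕ → ℕ → ℚ, ∀ t : ℝ, (∀ k ∈ range (n + 1), t + k ≠ 0) →
      RzetaHat s n t = ∑ k ∈ range (n + 1), ∑ i ∈ Icc 1 s, (c k i : ℝ) * ((t + k) ^ i)⁻¹ := by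
  set p : ℚ[X] := C ((n.factorial : ℚ) ^ (s - 6) * 2 ^ (12 * n)) *
    ∏ j ∈ Icc 1 (3 * n), (X - C ((n : ℚ) + 1 / 2 - j)) ^ 2
  have hpdeg : p.natDegree ≤ 6 * n := by
    refine (natDegree_C_mul_le _ _).trans ((natDegree_prod_le _ _).trans ?_)
    simp only [natDegree_pow, natDegree_X_sub_C, sum_const, Nat.card_Icc, smul_eq_mul]
    omega
  have hp : p.degree < (#(range (n + 1)) * s : ℕ) := by
    refine degree_le_natDegree.trans_lt (WithBot.coe_lt_coe.mpr ?_)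
    rw [card_range]
    nlinarith
  have hinj : Set.InjOn (fun k : ℕ => -(k : ℚ)) (range (n + 1)) :=
    fun k _ m _ h => by simpa using h
  obtain ⟨c, hc⟩ := exists_aeval_div_prod_eq_sum_inv_pow (L := ℝ) hinj hp
  refine ⟨c, fun t ht => ?_⟩
  have hnum : aeval t p = (n.factorial : ℝ) ^ (s - 6) * 2 ^ (12 * n) *
      ∏ j ∈ Icc 1 (3 * n), (t - n - 1 / 2 + j) ^ 2 := by
    simp only [p, map_mul, map_prod, map_pow, map_sub, aeval_C, aeval_X]
    push_cast
    congr 1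
    exact prod_congr rfl fun j _ => by norm_num; ring
  simpa [RzetaHat, hnum] using hc t (by simpa using ht)

theorem RzetaHat_nonneg (hse : Even s) (t : ℝ) : 0 ≤ RzetaHat s n t :=
  div_nonneg (by positivity) (prod_nonneg fun j _ => hse.pow_nonneg _)

theorem RzetaHat_neg_sub (hse : Even s) (t : ℝ) : RzetaHat s n (-n - t) = RzetaHat s n t := by
  have hnum : ∏ j ∈ Icc 1 (3 * n), (-n - t - n - 1 / 2 + j) ^ 2 =
      ∏ j ∈ Icc 1 (3 * n), (t - n - 1 / 2 + j) ^ 2 := by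
    refine prod_nbij' (fun j => 3 * n + 1 - j) (fun j => 3 * n + 1 - j)
      (fun j hj => by simp at hj ⊢; omega) (fun j hj => by simp at hj ⊢; omega)
      (fun j hj => by simp at hj; omega) (fun j hj => by simp at hj; omega) fun j hj => ?_
    simp only [mem_Icc] at hj
    rw [Nat.cast_sub (by omega)]
    push_cast
    ring
  have hden : ∏ j ∈ range (n + 1), (-n - t + j) ^ s = ∏ j ∈ range (n + 1), (t + j) ^ s := by
    rw [← prod_range_reflect]
    refine prod_congr rfl fun j hj => ?_
    rw [mem_range] at hj
    rw [Nat.add_sub_cancel, Nat.cast_sub (by omega), show -(n : ℝ) - t + (n - j) = -(t + j) by ring,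
      hse.neg_pow]
  rw [RzetaHat, RzetaHat, hnum, hden]

theorem RzetaHat_neg_half_eq_zero {ν : ℕ} (hν : ν < 2 * n) :
    RzetaHat s n (-((ν : ℝ) + 1 / 2)) = 0 := by
  refine div_eq_zero_iff.mpr (Or.inl (mul_eq_zero_of_right _ (prod_eq_zero (i := n + ν + 1)
    (by simp; omega) ?_)))
  push_cast
  ring

theorem hasSum_RzetaHat_add_RzetaHat_neg (hs : 6 ≤ s) :
    ∃ c : ℕ → ℕ → ℚ, HasSum
      (fun ν : ℕ => RzetaHat s n ((ν : ℝ) + 1 / 2) + RzetaHat s n (-((ν : ℝ) + 1 / 2)))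
      (∑ k ∈ range (n + 1), ∑ i ∈ Icc 1 s,
        (c k i : ℝ) * halfIntZeta i) := by
  obtain ⟨c, hc⟩ := RzetaHat_eq_sum_inv_pow (n := n) hs
  refine ⟨c, (hasSum_sum fun k _ => hasSum_sum fun i hi =>
    (hasSum_halfInt_pair_inv_pow (mem_Icc.mp hi).1 k).mul_left (c k i : ℝ)).congr_fun fun ν => ?_⟩
  have hpos : ∀ k ∈ range (n + 1), (ν : ℝ) + 1 / 2 + k ≠ 0 := fun k _ => by
    convert intCast_add_half_ne_zero (ν + k) using 1; push_cast; ring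
  have hneg : ∀ k ∈ range (n + 1), -((ν : ℝ) + 1 / 2) + k ≠ 0 := fun k _ => by
    convert intCast_add_half_ne_zero (k - ν - 1) using 1; push_cast; ring
  rw [hc _ hpos, hc _ hneg, ← sum_add_distrib]
  refine sum_congr rfl fun k _ => ?_
  rw [← sum_add_distrib]
  exact sum_congr rfl fun i _ => by ring

theorem hasSum_RzetaHat_neg_of_hasSum (hse : Even s) {a : ℝ}
    (hF : HasSum (fun ν : ℕ => RzetaHat s n ((ν : ℝ) + 1 / 2)) a) :
    HasSum (fun ν : ℕ => RzetaHat s n (-((ν : ℝ) + 1 / 2))) a := by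
  have hzero : ∑ ν ∈ range n, RzetaHat s n (-((ν : ℝ) + 1 / 2)) = 0 :=
    sum_eq_zero fun ν hν => RzetaHat_neg_half_eq_zero (by rw [mem_range] at hν; omega)
  rw [← hasSum_nat_add_iff' n, hzero, sub_zero]
  refine hF.congr_fun fun ν => ?_
  rw [← RzetaHat_neg_sub hse]
  congr 1
  push_cast
  ring

end RzetaHat

theorem stmt19_general (s n : ℕ) (hs : 8 ≤ s) (hse : Even s) :
    Summable (fun ν : ℕ => RzetaHat s n (((ν : ℝ) + 1) - 1 / 2)) ∧
    ∃ q : ℕ → ℚ,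
      (∑' ν : ℕ, RzetaHat s n (((ν : ℝ) + 1) - 1 / 2)) =
        ∑ j ∈ Finset.Icc 1 (s / 2), (q j : ℝ) * zetaVal (2 * j) := by
  simp only [show ∀ ν : ℕ, (ν : ℝ) + 1 - 1 / 2 = ν + 1 / 2 from fun ν => by ring]
  obtain ⟨c, hFG⟩ := hasSum_RzetaHat_add_RzetaHat_neg (n := n) (by omega : 6 ≤ s)
  have hF : Summable fun ν : ℕ => RzetaHat s n ((ν : ℝ) + 1 / 2) :=
    hFG.summable.of_nonneg_of_le (fun _ => RzetaHat_nonneg hse _)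
      fun _ => le_add_of_nonneg_right (RzetaHat_nonneg hse _)
  have htwice := (hF.hasSum.add (hasSum_RzetaHat_neg_of_hasSum hse hF.hasSum)).unique hFG
  refine ⟨hF, fun j => (2 ^ (2 * j) - 1) * ∑ k ∈ range (n + 1), c k (2 * j), ?_⟩
  rw [sum_sum_mul_halfIntZeta_eq] at htwice
  linarith

theorem stmt19 (s n : ℕ) (hs : 8 ≤ s) (hse : Even s) (hn : 1 ≤ n) :
    Summable (fun ν : ℕ => RzetaHat s n (((ν : ℝ) + 1) - 1 / 2)) ∧
    ∃ q : ℕ → ℚ,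
      (∑' ν : ℕ, RzetaHat s n (((ν : ℝ) + 1) - 1 / 2)) =
        ∑ j ∈ Finset.Icc 1 (s / 2), (q j : ℝ) * zetaVal (2 * j) :=
  stmt19_general s n hs hse
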